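/- Let (dᵢ) be a sequence of pairwise distinct positive integers tending to infinity and ω a nonprincipal ultrafilter on ℕ. Then there is a nonprincipal ultrafilter ω' on ℕ such that for every metric space X, Con^ω(X, (dᵢ)) is isometric to Con^{ω'}(X, (i)) (the asymptotic cone with scaling sequence dᵢ = i). -/
import Mathlib


open Filter

/-- `ω` is a nonprincipal ultrafilter. -/
def NonPrincipal (ω : Ultrafilter ℕ) : Prop := ∀ S : Set ℕ, S.Finite → S ∉ ω

/-- `a` is the ultralimit of `h` along `ω`. -/
def IsULim (ω : Ultrafilter ℕ) (h : ℕ → ℝ) (a : ℝ) : Prop :=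
  ∀ ε : ℝ, 0 < ε → {i : ℕ | |h i - a| < ε} ∈ ω

/-- A sequence `g` is admissible for the asymptotic cone construction with scaling
sequence `s` and basepoint `x₀`: it stays at distance O(s i) from the basepoint. -/
def Adm {X : Type*} [MetricSpace X] (s : ℕ → ℝ) (x₀ : X) (g : ℕ → X) : Prop :=
  ∃ c : ℝ, ∀ i, dist (g i) x₀ ≤ c * s i

/-- `q : (ℕ → X) → Y` presents the metric space `Y` as the asymptotic cone
`Con^ω(X, (s i))`: every point of `Y` is the class of an admissible sequence, the
distance in `Y` is the ultralimit of the rescaled distances, and two admissible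
sequences have the same image iff they are equivalent. -/
def ConePres {X Y : Type*} [MetricSpace X] [MetricSpace Y]
    (ω : Ultrafilter ℕ) (s : ℕ → ℝ) (x₀ : X) (q : (ℕ → X) → Y) : Prop :=
  (∀ y : Y, ∃ f : ℕ → X, Adm s x₀ f ∧ q f = y) ∧
  (∀ f g : ℕ → X, Adm s x₀ f → Adm s x₀ g →
    IsULim ω (fun i => dist (f i) (g i) / s i) (dist (q f) (q g))) ∧
  (∀ f g : ℕ → X, Adm s x₀ f → Adm s x₀ g →
    (q f = q g ↔ IsULim ω (fun i => dist (f i) (g i) / s i) 0))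

open Classical in
noncomputable def extSeq {X : Type} (d : ℕ → ℕ) (x₀ : X) (f : ℕ → X) : ℕ → X :=
  fun j => if h : ∃ i, d i = j then f h.choose else x₀

lemma extSeq_apply {X : Type} {d : ℕ → ℕ} (hinj : Function.Injective d)
    (x₀ : X) (f : ℕ → X) (i : ℕ) : extSeq d x₀ f (d i) = f i := by
  have h : ∃ i', d i' = d i := ⟨i, rfl⟩
  simp only [extSeq, dif_pos h]
  exact congrArg f (hinj h.choose_spec)

lemma isULim_map (d : ℕ → ℕ) (ω : Ultrafilter ℕ) (h : ℕ → ℝ) (a : ℝ) :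
    IsULim (Ultrafilter.map d ω) h a ↔ IsULim ω (fun i => h (d i)) a := by
  simp only [IsULim, Ultrafilter.mem_map, Set.preimage_setOf_eq]

lemma isULim_unique (ω : Ultrafilter ℕ) (h : ℕ → ℝ) {a b : ℝ}
    (ha : IsULim ω h a) (hb : IsULim ω h b) : a = b := by
  by_contra hne
  have hε : 0 < |a - b| / 2 := by
    have : |a - b| > 0 := abs_pos.mpr (sub_ne_zero.mpr hne)
    linarith
  obtain ⟨i, hia, hib⟩ := Filter.nonempty_of_mem (Filter.inter_mem (ha _ hε) (hb _ hε))
  simp only [Set.mem_setOf_eq] at hia hib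
  have h1 := abs_lt.mp hia
  have h2 := abs_lt.mp hib
  rcases abs_cases (a - b) with ⟨h3, h4⟩ | ⟨h3, h4⟩ <;>
    linarith [h1.1, h1.2, h2.1, h2.2]

/-- For pairwise distinct positive integer scaling constants `dᵢ → ∞` and a nonprincipal
ultrafilter `ω`, there is a nonprincipal ultrafilter `ω'` such that for every metric space
`X`, the cone `Con^ω(X, (dᵢ))` is isometric to the cone `Con^{ω'}(X, (i))` with scaling
sequence `(i)`. -/
theorem cone_with_distinct_integer_scalars_is_restricted_cone
    (d : ℕ → ℕ) (hinj : Function.Injective d) (hpos : ∀ i, 0 < d i)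
    (htend : Tendsto (fun i => (d i : ℝ)) atTop atTop)
    (ω : Ultrafilter ℕ) (hω : NonPrincipal ω) :
    ∃ ω' : Ultrafilter ℕ, NonPrincipal ω' ∧
      ∀ (X : Type) [MetricSpace X], ∀ (x₀ : X),
        ∀ (Y Z : Type) [MetricSpace Y] [MetricSpace Z],
          ∀ (qY : (ℕ → X) → Y) (qZ : (ℕ → X) → Z),
            ConePres ω (fun i => (d i : ℝ)) x₀ qY →
            ConePres ω' (fun i => (i : ℝ)) x₀ qZ →
            ∃ Φ : Y → Z, Function.Bijective Φ ∧
              ∀ u v : Y, dist (Φ u) (Φ v) = dist u v := by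
  refine ⟨Ultrafilter.map d ω, ?_, ?_⟩
  · intro S hS hmem
    exact hω _ (hS.preimage hinj.injOn) (Ultrafilter.mem_map.mp hmem)
  intro X _ x₀ Y Z _ _ qY qZ hY hZ
  obtain ⟨hY1, hY2, hY3⟩ := hY
  obtain ⟨hZ1, hZ2, hZ3⟩ := hZ
  -- extensions of admissible sequences are admissible
  have adm_ext : ∀ f : ℕ → X, Adm (fun i => (d i : ℝ)) x₀ f →
      Adm (fun j => (j : ℝ)) x₀ (extSeq d x₀ f) := by
    rintro f ⟨c, hc⟩
    have hd0 : (1 : ℝ) ≤ (d 0 : ℝ) := by exact_mod_cast hpos 0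
    have hc0 : 0 ≤ c := by nlinarith [hc 0, dist_nonneg (x := f 0) (y := x₀)]
    refine ⟨c, fun j => ?_⟩
    by_cases h : ∃ i, d i = j
    · simp only [extSeq, dif_pos h]
      calc dist (f h.choose) x₀ ≤ c * ((d h.choose : ℕ) : ℝ) := hc h.choose
        _ = c * (j : ℝ) := by rw [h.choose_spec]
    · simp only [extSeq, dif_neg h, dist_self]
      positivity
  -- key distance computation
  have key : ∀ f g : ℕ → X, Adm (fun i => (d i : ℝ)) x₀ f →
      Adm (fun i => (d i : ℝ)) x₀ g →
      dist (qZ (extSeq d x₀ f)) (qZ (extSeq d x₀ g)) = dist (qY f) (qY g) := by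
    intro f g hf hg
    have h1 := hZ2 _ _ (adm_ext f hf) (adm_ext g hg)
    have h2 : IsULim ω (fun i => dist (f i) (g i) / (d i : ℝ))
        (dist (qZ (extSeq d x₀ f)) (qZ (extSeq d x₀ g))) := by
      have := (isULim_map d ω _ _).mp h1
      simpa only [extSeq_apply hinj] using this
    exact isULim_unique ω _ h2 (hY2 f g hf hg)
  choose F hFadm hFq using hY1
  refine ⟨fun y => qZ (extSeq d x₀ (F y)), ⟨?_, ?_⟩, ?_⟩
  · -- injective
    intro u v huv
    have : dist (qY (F u)) (qY (F v)) = 0 := by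
      rw [← key _ _ (hFadm u) (hFadm v),
        show qZ (extSeq d x₀ (F u)) = qZ (extSeq d x₀ (F v)) from huv, dist_self]
    rw [hFq u, hFq v] at this
    exact dist_eq_zero.mp this
  · -- surjective
    intro z
    obtain ⟨g, hg, hgz⟩ := hZ1 z
    have hfadm : Adm (fun i => (d i : ℝ)) x₀ (fun i => g (d i)) := by
      obtain ⟨c, hc⟩ := hg
      exact ⟨c, fun i => hc (d i)⟩
    refine ⟨qY (fun i => g (d i)), ?_⟩
    rw [← hgz]
    apply (hZ3 _ _ (adm_ext _ (hFadm _)) hg).mpr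
    rw [isULim_map]
    have h0 : IsULim ω (fun i =>
        dist ((fun i => g (d i)) i) (F (qY fun i => g (d i)) i) / (d i : ℝ)) 0 :=
      (hY3 _ _ hfadm (hFadm _)).mp (hFq _).symm
    simpa only [extSeq_apply hinj, dist_comm] using h0
  · -- isometry
    intro u v
    rw [key _ _ (hFadm u) (hFadm v), hFq u, hFq v]
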